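/- arXiv:1905.00887 — 3 statements merged into one kernel-verified Lean document; each statement's English description precedes it below -/
import Mathlib

section
/- Let N ≥ 2 and let Θ be a smooth real function of the variables (q¹,...,q^{N−1}, p¹,...,p^{N−1}, x¹,...,x^{2N}, y¹,...,y^{2N}). Suppose Θ satisfies, for every pair 1 ≤ i < j ≤ 2N, the 2+2N-dimensional heavenly equation Θ_{x^i y^j} − Θ_{x^j y^i} = {Θ_{x^i}, Θ_{x^j}}_{(q,p)}, where {f,g}_{(q,p)} := Σ_{k=1}^{N−1} (f_{q^k} g_{p^k} − f_{p^k} g_{q^k}). Then for every fixed (q,p), the skew matrix ω_{ij} := Θ_{x^i y^j} − Θ_{x^j y^i} satisfies the 2N+2N-dimensional TED equation Σ_{σ∈S_{2N}} sgn(σ) ∏_{k=1}^{N} ω_{σ(2k−1),σ(2k)} = 0 identically. -/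
noncomputable section

/-- The space of the variables `(q¹,…,q^{N−1}, p¹,…,p^{N−1}, x¹,…,x^{2N}, y¹,…,y^{2N})`. -/
abbrev DN (N : ℕ) : Type :=
  (Fin (N - 1) → ℝ) × (Fin (N - 1) → ℝ) × (Fin (2 * N) → ℝ) × (Fin (2 * N) → ℝ)

/-- Directional (partial) derivative of `f` in the direction `v`. -/
def pdv {E : Type*} [NormedAddCommGroup E] [NormedSpace ℝ E]
    (v : E) (f : E → ℝ) (z : E) : ℝ := fderiv ℝ f z v

/-- Direction of the coordinate `q^k`. -/
def dq (N : ℕ) (k : Fin (N - 1)) : DN N := (Pi.single k 1, 0, 0, 0)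
/-- Direction of the coordinate `p^k`. -/
def dp (N : ℕ) (k : Fin (N - 1)) : DN N := (0, Pi.single k 1, 0, 0)
/-- Direction of the coordinate `x^i`. -/
def dx (N : ℕ) (i : Fin (2 * N)) : DN N := (0, 0, Pi.single i 1, 0)
/-- Direction of the coordinate `y^i`. -/
def dy (N : ℕ) (i : Fin (2 * N)) : DN N := (0, 0, 0, Pi.single i 1)

/-- `ω_{ij} = Θ_{x^i y^j} − Θ_{x^j y^i}`. -/
def ωc (N : ℕ) (Θ : DN N → ℝ) (i j : Fin (2 * N)) (z : DN N) : ℝ :=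
  pdv (dx N i) (pdv (dy N j) Θ) z - pdv (dx N j) (pdv (dy N i) Θ) z

/-- The Pfaffian-type sum `Σ_{σ ∈ S_{2N}} sgn(σ) Π_{k=1}^{N} ω_{σ(2k−1) σ(2k)}`
(written with `0`-based indices: the `k`-th factor pairs `σ(2k)` with `σ(2k+1)`). -/
def pfSum (N : ℕ) (ω : Fin (2 * N) → Fin (2 * N) → ℝ) : ℝ :=
  ∑ σ : Equiv.Perm (Fin (2 * N)), ((Equiv.Perm.sign σ : ℤ) : ℝ) *
    ∏ k : Fin N, ω (σ ⟨2 * k.1, by have := k.2; omega⟩) (σ ⟨2 * k.1 + 1, by have := k.2; omega⟩)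

lemma prod_range_two_mul (n : ℕ) (g : ℕ → ℝ) :
    ∏ i ∈ Finset.range (2 * n), g i = ∏ k ∈ Finset.range n, (g (2 * k) * g (2 * k + 1)) := by
  induction n with
  | zero => simp
  | succ n ih =>
      rw [Nat.mul_succ, show 2*n+2 = (2*n+1)+1 by ring, Finset.prod_range_succ,
        Finset.prod_range_succ, Finset.prod_range_succ, ih]
      ring

open Matrix in
lemma det_zero_of_rows_in_span {n : ℕ} {ι : Type*} [Fintype ι] (hι : Fintype.card ι < n)
    (v : ι → (Fin n → ℝ)) (M : Matrix (Fin n) (Fin n) ℝ)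
    (h : ∀ i, M i ∈ Submodule.span ℝ (Set.range v)) : M.det = 0 := by
  rw [← Matrix.exists_vecMul_eq_zero_iff]
  set W := Submodule.span ℝ (Set.range v)
  have hW : FiniteDimensional ℝ W := FiniteDimensional.span_of_finite ℝ (Set.finite_range v)
  have hnli : ¬ LinearIndependent ℝ M := by
    intro hli
    have hli' : LinearIndependent ℝ (fun i => (⟨M i, h i⟩ : W)) := by
      apply LinearIndependent.of_comp W.subtype
      exact hli
    have h1 : Fintype.card (Fin n) ≤ Module.finrank ℝ W :=
      LinearIndependent.fintype_card_le_finrank hli'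
    have h2 : Module.finrank ℝ W ≤ Fintype.card ι := finrank_range_le_card v
    simp [Fintype.card_fin] at h1
    omega
  replace hnli := Fintype.not_linearIndependent_iff.mp hnli
  obtain ⟨g, hg, i0, hi0⟩ := hnli
  refine ⟨g, ?_, ?_⟩
  · intro hg0; exact hi0 (by simp [hg0])
  · ext j
    have := congrFun hg j
    simpa [Matrix.vecMul, dotProduct] using this

open Matrix in
lemma pfSum_eq_zero {N m : ℕ} (hm : m < N) (A B : Fin (2 * N) → Fin m → ℝ) :
    pfSum N (fun i j => ∑ k : Fin m, (A i k * B j k - B i k * A j k)) = 0 := by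
  classical
  set u : Fin m × Bool → Fin (2 * N) → ℝ :=
    fun t i => if t.2 then -(B i t.1) else A i t.1 with hu
  set w : Fin m × Bool → Fin (2 * N) → ℝ :=
    fun t i => if t.2 then A i t.1 else B i t.1 with hw
  have hω : ∀ i j : Fin (2 * N),
      (∑ k : Fin m, (A i k * B j k - B i k * A j k)) = ∑ t : Fin m × Bool, u t i * w t j := by
    intro i j
    rw [Fintype.sum_prod_type]
    refine Finset.sum_congr rfl fun k _ => ?_
    simp [hu, hw]
    ring
  -- the matrix whose determinant appears after expanding
  have hN2 : 0 < 2 * N := by omega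
  set M : (Fin N → Fin m × Bool) → Matrix (Fin (2 * N)) (Fin (2 * N)) ℝ :=
    fun x i j => if i.1 % 2 = 0 then u (x ⟨i.1 / 2, by omega⟩) j
      else w (x ⟨i.1 / 2, by omega⟩) j with hM
  have key : ∀ (x : Fin N → Fin m × Bool) (σ : Equiv.Perm (Fin (2 * N))),
      (∏ k : Fin N, u (x k) (σ ⟨2 * k.1, by have := k.2; omega⟩)
        * w (x k) (σ ⟨2 * k.1 + 1, by have := k.2; omega⟩))
      = ∏ i : Fin (2 * N), M x i (σ i) := by
    intro x σ
    set F : ℕ → ℝ := fun i => if h : i < 2 * N then M x ⟨i, h⟩ (σ ⟨i, h⟩) else 1 with hF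
    have h1 : ∏ i : Fin (2 * N), M x i (σ i) = ∏ i ∈ Finset.range (2 * N), F i := by
      rw [← Fin.prod_univ_eq_prod_range]
      refine Finset.prod_congr rfl fun i _ => ?_
      simp [hF]
    rw [h1, prod_range_two_mul, ← Fin.prod_univ_eq_prod_range
      (fun k => F (2 * k) * F (2 * k + 1)) N]
    refine Finset.prod_congr rfl fun k _ => ?_
    have hk2 : 2 * k.1 < 2 * N := by have := k.2; omega
    have hk2' : 2 * k.1 + 1 < 2 * N := by have := k.2; omega
    have e0 : F (2 * k.1) = u (x k) (σ ⟨2 * k.1, hk2⟩) := by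
      simp only [hF]
      rw [dif_pos hk2]
      have hmod : (2 * k.1) % 2 = 0 := Nat.mul_mod_right 2 k.1
      rw [hM]
      simp only [hmod, if_pos]
      congr 1
      · congr 1
        ext
        simp [Nat.mul_div_cancel_left k.1 (by norm_num : 0 < 2)]
    have e1 : F (2 * k.1 + 1) = w (x k) (σ ⟨2 * k.1 + 1, hk2'⟩) := by
      simp only [hF]
      rw [dif_pos hk2']
      have hmod : (2 * k.1 + 1) % 2 = 1 := by omega
      rw [hM]
      simp only [hmod]
      norm_num
      congr 1
      · congr 1
        ext
        simp
        omega
    rw [e0, e1]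
  -- each expanded determinant is zero
  have hdet : ∀ x : Fin N → Fin m × Bool, (M x)ᵀ.det = 0 := by
    intro x
    rw [Matrix.det_transpose]
    refine det_zero_of_rows_in_span (ι := Fin m ⊕ Fin m) (by simp; omega)
      (Sum.elim (fun k j => A j k) (fun k j => B j k)) _ fun i => ?_
    set t := x ⟨i.1 / 2, by omega⟩ with ht
    by_cases h2 : i.1 % 2 = 0
    · have : M x i = u t := by funext j; simp [hM, h2, ht]
      rw [this]
      cases hb : t.2
      · have : u t = Sum.elim (fun k j => A j k) (fun (k : Fin m) j => B j k) (Sum.inl t.1) := by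
          funext j; simp [hu, hb]
        rw [this]; exact Submodule.subset_span ⟨Sum.inl t.1, rfl⟩
      · have : u t = -(Sum.elim (fun (k : Fin m) j => A j k) (fun k j => B j k) (Sum.inr t.1)) := by
          funext j; simp [hu, hb]
        rw [this]
        exact neg_mem (Submodule.subset_span ⟨Sum.inr t.1, rfl⟩)
    · have : M x i = w t := by funext j; simp [hM, h2, ht]
      rw [this]
      cases hb : t.2
      · have : w t = Sum.elim (fun (k : Fin m) j => A j k) (fun k j => B j k) (Sum.inr t.1) := by
          funext j; simp [hw, hb]
        rw [this]; exact Submodule.subset_span ⟨Sum.inr t.1, rfl⟩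
      · have : w t = Sum.elim (fun k j => A j k) (fun (k : Fin m) j => B j k) (Sum.inl t.1) := by
          funext j; simp [hw, hb]
        rw [this]; exact Submodule.subset_span ⟨Sum.inl t.1, rfl⟩
  -- main computation
  unfold pfSum
  have expand : ∀ σ : Equiv.Perm (Fin (2 * N)),
      (∏ k : Fin N, ∑ t : Fin m × Bool,
        u t (σ ⟨2 * k.1, by have := k.2; omega⟩) * w t (σ ⟨2 * k.1 + 1, by have := k.2; omega⟩))
      = ∑ x ∈ Fintype.piFinset (fun _ : Fin N => (Finset.univ : Finset (Fin m × Bool))),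
          ∏ i : Fin (2 * N), M x i (σ i) := by
    intro σ
    rw [Finset.prod_univ_sum]
    exact Finset.sum_congr rfl fun x _ => key x σ
  calc ∑ σ : Equiv.Perm (Fin (2 * N)), ((Equiv.Perm.sign σ : ℤ) : ℝ) *
        ∏ k : Fin N, (∑ t : Fin m,
          (A (σ ⟨2 * ↑k, by have := k.2; omega⟩) t * B (σ ⟨2 * ↑k + 1, by have := k.2; omega⟩) t -
           B (σ ⟨2 * ↑k, by have := k.2; omega⟩) t * A (σ ⟨2 * ↑k + 1, by have := k.2; omega⟩) t))
      = ∑ σ : Equiv.Perm (Fin (2 * N)),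
          ∑ x ∈ Fintype.piFinset (fun _ : Fin N => (Finset.univ : Finset (Fin m × Bool))),
            ((Equiv.Perm.sign σ : ℤ) : ℝ) * ∏ i : Fin (2 * N), M x i (σ i) := by
        refine Finset.sum_congr rfl fun σ _ => ?_
        rw [← Finset.mul_sum, ← expand σ]
        congr 1
        refine Finset.prod_congr rfl fun k _ => ?_
        exact hω _ _
    _ = ∑ x ∈ Fintype.piFinset (fun _ : Fin N => (Finset.univ : Finset (Fin m × Bool))),
          ∑ σ : Equiv.Perm (Fin (2 * N)),
            ((Equiv.Perm.sign σ : ℤ) : ℝ) * ∏ i : Fin (2 * N), M x i (σ i) := Finset.sum_comm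
    _ = 0 := by
        refine Finset.sum_eq_zero fun x _ => ?_
        have : (M x)ᵀ.det = ∑ σ : Equiv.Perm (Fin (2 * N)),
            ((Equiv.Perm.sign σ : ℤ) : ℝ) * ∏ i : Fin (2 * N), M x i (σ i) := by
          rw [Matrix.det_apply']
          exact Finset.sum_congr rfl fun σ _ => by
            congr 1
        rw [← this, hdet x]

/-- if a smooth `Θ` of `(q¹,…,q^{N−1},p¹,…,p^{N−1},x¹,…,x^{2N},y¹,…,y^{2N})`
satisfies the `2+2N`-dimensional heavenly equation
`Θ_{x^i y^j} − Θ_{x^j y^i} = {Θ_{x^i}, Θ_{x^j}}_{(q,p)}` for all `1 ≤ i < j ≤ 2N`, then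
`ω_{ij} = Θ_{x^i y^j} − Θ_{x^j y^i}` satisfies the `2N+2N`-dimensional TED equation
`Σ_{σ ∈ S_{2N}} sgn(σ) Π_{k=1}^{N} ω_{σ(2k−1) σ(2k)} = 0` identically. -/
theorem stmt8 (N : ℕ) (hN : 2 ≤ N) (Θ : DN N → ℝ) (hΘ : ContDiff ℝ (⊤ : ℕ∞) Θ)
    (heav : ∀ i j : Fin (2 * N), i < j → ∀ z : DN N,
      ωc N Θ i j z =
        ∑ k : Fin (N - 1),
          (pdv (dq N k) (pdv (dx N i) Θ) z * pdv (dp N k) (pdv (dx N j) Θ) z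
            - pdv (dp N k) (pdv (dx N i) Θ) z * pdv (dq N k) (pdv (dx N j) Θ) z)) :
    ∀ z : DN N, pfSum N (fun i j => ωc N Θ i j z) = 0 := by
  intro z
  set A : Fin (2 * N) → Fin (N - 1) → ℝ := fun i k => pdv (dq N k) (pdv (dx N i) Θ) z with hA
  set B : Fin (2 * N) → Fin (N - 1) → ℝ := fun i k => pdv (dp N k) (pdv (dx N i) Θ) z with hB
  have hrep : ∀ i j : Fin (2 * N),
      ωc N Θ i j z = ∑ k : Fin (N - 1), (A i k * B j k - B i k * A j k) := by
    intro i j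
    rcases lt_trichotomy i j with hij | hij | hij
    · simpa [hA, hB] using heav i j hij z
    · subst hij
      have h0 : ωc N Θ i i z = 0 := by unfold ωc; ring
      rw [h0]
      exact (Finset.sum_eq_zero fun k _ => by ring).symm
    · have hneg : ωc N Θ i j z = -ωc N Θ j i z := by unfold ωc; ring
      rw [hneg, heav j i hij z, ← Finset.sum_neg_distrib]
      exact Finset.sum_congr rfl fun k _ => by simp [hA, hB]; ring
  have : (fun i j => ωc N Θ i j z)
      = fun i j => ∑ k : Fin (N - 1), (A i k * B j k - B i k * A j k) := by
    funext i j; exact hrep i j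
  rw [this]
  exact pfSum_eq_zero (by omega) A B

end
end

section
/- Let N ≥ 2, let Θ be a smooth real function of (q¹,...,q^{N−1}, p¹,...,p^{N−1}, x¹,...,x^{2N}, y¹,...,y^{2N}), let λ ∈ ℝ, and fix distinct i, j ∈ {1,...,2N}. Define operators on smooth functions Ψ of the same variables by L_m Ψ := Ψ_{y^m} − λΨ_{x^m} + Σ_{k=1}^{N−1} (Θ_{x^m q^k}Ψ_{p^k} − Θ_{x^m p^k}Ψ_{q^k}) for m = i, j. If Θ satisfies Θ_{x^i y^j} − Θ_{x^j y^i} = {Θ_{x^i}, Θ_{x^j}}_{(q,p)} identically, where {f,g}_{(q,p)} := Σ_{k=1}^{N−1}(f_{q^k}g_{p^k} − f_{p^k}g_{q^k}), then L_i(L_j Ψ) = L_j(L_i Ψ) for every smooth Ψ and every λ ∈ ℝ. -/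
noncomputable section

/-- The Lax operator
`L_m Ψ = Ψ_{y^m} − λΨ_{x^m} + Σ_{k=1}^{N−1} (Θ_{x^m q^k}Ψ_{p^k} − Θ_{x^m p^k}Ψ_{q^k})`. -/
def Lop (N : ℕ) (Θ : DN N → ℝ) (lam : ℝ) (m : Fin (2 * N)) (Ψ : DN N → ℝ) (z : DN N) : ℝ :=
  pdv (dy N m) Ψ z - lam * pdv (dx N m) Ψ z
    + ∑ k : Fin (N - 1),
        (pdv (dq N k) (pdv (dx N m) Θ) z * pdv (dp N k) Ψ z
          - pdv (dp N k) (pdv (dx N m) Θ) z * pdv (dq N k) Ψ z)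

section API
variable {E : Type*} [NormedAddCommGroup E] [NormedSpace ℝ E]
variable {f g : E → ℝ} {z v u : E}

lemma pdv_smooth (hf : ContDiff ℝ (⊤ : ℕ∞) f) (v : E) : ContDiff ℝ (⊤ : ℕ∞) (pdv v f) := by
  have h1 : ContDiff ℝ (⊤ : ℕ∞) (fderiv ℝ f) := hf.fderiv_right (by simp)
  exact h1.clm_apply contDiff_const

lemma pdv_diff (hf : ContDiff ℝ (⊤ : ℕ∞) f) (v : E) : Differentiable ℝ (pdv v f) :=
  (pdv_smooth hf v).differentiable (by simp)

lemma pdv_add (hf : DifferentiableAt ℝ f z) (hg : DifferentiableAt ℝ g z) (v : E) :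
    pdv v (fun w => f w + g w) z = pdv v f z + pdv v g z := by
  simp [pdv, fderiv_fun_add hf hg]

lemma pdv_sub (hf : DifferentiableAt ℝ f z) (hg : DifferentiableAt ℝ g z) (v : E) :
    pdv v (fun w => f w - g w) z = pdv v f z - pdv v g z := by
  simp [pdv, fderiv_fun_sub hf hg]

lemma pdv_neg (v : E) : pdv v (fun w => -f w) z = - pdv v f z := by
  simp [pdv, fderiv_neg]

lemma pdv_const_mul (hf : DifferentiableAt ℝ f z) (c : ℝ) (v : E) :
    pdv v (fun w => c * f w) z = c * pdv v f z := by
  simp [pdv, fderiv_const_mul hf c]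

lemma pdv_mul (hf : DifferentiableAt ℝ f z) (hg : DifferentiableAt ℝ g z) (v : E) :
    pdv v (fun w => f w * g w) z = f z * pdv v g z + g z * pdv v f z := by
  simp [pdv, fderiv_fun_mul hf hg]

lemma pdv_sum {ι : Type*} {s : Finset ι} {F : ι → E → ℝ}
    (h : ∀ i ∈ s, DifferentiableAt ℝ (F i) z) (v : E) :
    pdv v (fun w => ∑ i ∈ s, F i w) z = ∑ i ∈ s, pdv v (F i) z := by
  simp [pdv, fderiv_fun_sum h]

lemma pdv_comm (hf : ContDiff ℝ (⊤ : ℕ∞) f) (u v : E) (z : E) :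
    pdv u (pdv v f) z = pdv v (pdv u f) z := by
  have h1 : ContDiff ℝ (⊤ : ℕ∞) (fderiv ℝ f) := hf.fderiv_right (by simp)
  have hd : DifferentiableAt ℝ (fderiv ℝ f) z := (h1.differentiable (by simp)) z
  have key : ∀ a b : E, pdv a (pdv b f) z = fderiv ℝ (fderiv ℝ f) z a b := by
    intro a b
    have h2 : pdv b f = fun y => (fderiv ℝ f y) b := rfl
    rw [pdv, h2, fderiv_clm_apply hd (differentiableAt_const b)]
    simp
  rw [key u v, key v u]
  exact (hf.contDiffAt.isSymmSndFDerivAt (by rw [minSmoothness_of_isRCLikeNormedField]; exact WithTop.coe_le_coe.mpr (le_top : (2 : ℕ∞) ≤ ⊤))).eq u v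

end API

/-- Poisson bracket in the (q,p) variables. -/
def Pb (N : ℕ) (f g : DN N → ℝ) (z : DN N) : ℝ :=
  ∑ k : Fin (N - 1),
    (pdv (dq N k) f z * pdv (dp N k) g z - pdv (dp N k) f z * pdv (dq N k) g z)

section PB
variable {N : ℕ} {f g h : DN N → ℝ} {z : DN N}

lemma Pb_smooth (hf : ContDiff ℝ (⊤ : ℕ∞) f) (hg : ContDiff ℝ (⊤ : ℕ∞) g) : ContDiff ℝ (⊤ : ℕ∞) (Pb N f g) := by
  apply ContDiff.sum
  intro k _
  exact ((pdv_smooth hf _).mul (pdv_smooth hg _)).sub ((pdv_smooth hf _).mul (pdv_smooth hg _))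

lemma pdv_Pb (hf : ContDiff ℝ (⊤ : ℕ∞) f) (hg : ContDiff ℝ (⊤ : ℕ∞) g) (v : DN N) (z : DN N) :
    pdv v (Pb N f g) z = Pb N (pdv v f) g z + Pb N f (pdv v g) z := by
  have hPb : Pb N f g = fun w => ∑ k : Fin (N - 1),
      (pdv (dq N k) f w * pdv (dp N k) g w - pdv (dp N k) f w * pdv (dq N k) g w) := rfl
  rw [hPb, pdv_sum (F := fun k w => pdv (dq N k) f w * pdv (dp N k) g w - pdv (dp N k) f w * pdv (dq N k) g w) (fun k _ =>
    (((pdv_diff hf _ z).mul (pdv_diff hg _ z)).sub ((pdv_diff hf _ z).mul (pdv_diff hg _ z))))]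
  unfold Pb
  rw [← Finset.sum_add_distrib]
  apply Finset.sum_congr rfl
  intro k _
  rw [pdv_sub (f := fun w => pdv (dq N k) f w * pdv (dp N k) g w) (g := fun w => pdv (dp N k) f w * pdv (dq N k) g w) (((pdv_diff hf _ z).mul (pdv_diff hg _ z))) (((pdv_diff hf _ z).mul (pdv_diff hg _ z))),
      pdv_mul (pdv_diff hf _ z) (pdv_diff hg _ z), pdv_mul (pdv_diff hf _ z) (pdv_diff hg _ z),
      pdv_comm hf v (dq N k) z, pdv_comm hf v (dp N k) z,
      pdv_comm hg v (dq N k) z, pdv_comm hg v (dp N k) z]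
  ring

lemma Pb_sub_left (hf : Differentiable ℝ f) (hg : Differentiable ℝ g) :
    Pb N (fun w => f w - g w) h z = Pb N f h z - Pb N g h z := by
  unfold Pb
  rw [← Finset.sum_sub_distrib]
  apply Finset.sum_congr rfl
  intro k _
  rw [pdv_sub (hf z) (hg z), pdv_sub (hf z) (hg z)]
  ring

lemma Pb_neg_left : Pb N (fun w => -f w) h z = - Pb N f h z := by
  unfold Pb
  rw [← Finset.sum_neg_distrib]
  apply Finset.sum_congr rfl
  intro k _
  rw [pdv_neg, pdv_neg]
  ring

end PB

lemma sum_antisym {n : ℕ} (T : Fin n → Fin n → ℝ) (hT : ∀ x k, T x k + T k x = 0) :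
    ∑ x, ∑ k, T x k = 0 := by
  have h1 : (∑ x, ∑ k, T x k) + (∑ x, ∑ k, T x k) = ∑ x, ∑ k, (T x k + T k x) := by
    have h2 : ∑ x, ∑ k, T k x = ∑ x, ∑ k, T x k := Finset.sum_comm
    simp only [Finset.sum_add_distrib, h2]
  simp only [hT, Finset.sum_const_zero] at h1
  linarith

lemma jac_alg {n : ℕ} (Fq Fp Gq Gp Hq Hp : Fin n → ℝ)
    (Fqq Fqp Fpq Fpp Gqq Gqp Gpq Gpp Hqq Hqp Hpq Hpp : Fin n → Fin n → ℝ)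
    (hFqq : ∀ a b, Fqq a b = Fqq b a) (hFpp : ∀ a b, Fpp a b = Fpp b a)
    (hFqp : ∀ a b, Fpq a b = Fqp b a)
    (hGqq : ∀ a b, Gqq a b = Gqq b a) (hGpp : ∀ a b, Gpp a b = Gpp b a)
    (hGqp : ∀ a b, Gpq a b = Gqp b a)
    (hHqq : ∀ a b, Hqq a b = Hqq b a) (hHpp : ∀ a b, Hpp a b = Hpp b a)
    (hHqp : ∀ a b, Hpq a b = Hqp b a) :
    ∑ x, (Fq x * ((∑ k, (Gqp k x * Hp k - Gpp k x * Hq k)) + ∑ k, (Gq k * Hpp k x - Gp k * Hqp k x))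
        - Fp x * ((∑ k, (Gqq k x * Hp k - Gpq k x * Hq k)) + ∑ k, (Gq k * Hpq k x - Gp k * Hqq k x)))
  - ∑ x, (Gq x * ((∑ k, (Fqp k x * Hp k - Fpp k x * Hq k)) + ∑ k, (Fq k * Hpp k x - Fp k * Hqp k x))
        - Gp x * ((∑ k, (Fqq k x * Hp k - Fpq k x * Hq k)) + ∑ k, (Fq k * Hpq k x - Fp k * Hqq k x)))
  = ∑ x, (((∑ k, (Fqq k x * Gp k - Fpq k x * Gq k)) + ∑ k, (Fq k * Gpq k x - Fp k * Gqq k x)) * Hp x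
        - ((∑ k, (Fqp k x * Gp k - Fpp k x * Gq k)) + ∑ k, (Fq k * Gpp k x - Fp k * Gqp k x)) * Hq x) := by
  set A : Fin n → Fin n → ℝ := fun x k =>
    Fq x * ((Gqp k x * Hp k - Gpp k x * Hq k) + (Gq k * Hpp k x - Gp k * Hqp k x))
      - Fp x * ((Gqq k x * Hp k - Gpq k x * Hq k) + (Gq k * Hpq k x - Gp k * Hqq k x)) with hA
  set B : Fin n → Fin n → ℝ := fun x k =>
    Gq x * ((Fqp k x * Hp k - Fpp k x * Hq k) + (Fq k * Hpp k x - Fp k * Hqp k x))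
      - Gp x * ((Fqq k x * Hp k - Fpq k x * Hq k) + (Fq k * Hpq k x - Fp k * Hqq k x)) with hB
  set C : Fin n → Fin n → ℝ := fun x k =>
    ((Fqq k x * Gp k - Fpq k x * Gq k) + (Fq k * Gpq k x - Fp k * Gqq k x)) * Hp x
      - ((Fqp k x * Gp k - Fpp k x * Gq k) + (Fq k * Gpp k x - Fp k * Gqp k x)) * Hq x with hC
  have e1 : ∀ x : Fin n,
      Fq x * ((∑ k, (Gqp k x * Hp k - Gpp k x * Hq k)) + ∑ k, (Gq k * Hpp k x - Gp k * Hqp k x))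
        - Fp x * ((∑ k, (Gqq k x * Hp k - Gpq k x * Hq k)) + ∑ k, (Gq k * Hpq k x - Gp k * Hqq k x))
      = ∑ k, A x k := by
    intro x
    rw [← Finset.sum_add_distrib, ← Finset.sum_add_distrib, Finset.mul_sum, Finset.mul_sum,
      ← Finset.sum_sub_distrib]
  have e2 : ∀ x : Fin n,
      Gq x * ((∑ k, (Fqp k x * Hp k - Fpp k x * Hq k)) + ∑ k, (Fq k * Hpp k x - Fp k * Hqp k x))
        - Gp x * ((∑ k, (Fqq k x * Hp k - Fpq k x * Hq k)) + ∑ k, (Fq k * Hpq k x - Fp k * Hqq k x))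
      = ∑ k, B x k := by
    intro x
    rw [← Finset.sum_add_distrib, ← Finset.sum_add_distrib, Finset.mul_sum, Finset.mul_sum,
      ← Finset.sum_sub_distrib]
  have e3 : ∀ x : Fin n,
      ((∑ k, (Fqq k x * Gp k - Fpq k x * Gq k)) + ∑ k, (Fq k * Gpq k x - Fp k * Gqq k x)) * Hp x
        - ((∑ k, (Fqp k x * Gp k - Fpp k x * Gq k)) + ∑ k, (Fq k * Gpp k x - Fp k * Gqp k x)) * Hq x
      = ∑ k, C x k := by
    intro x
    rw [← Finset.sum_add_distrib, ← Finset.sum_add_distrib, Finset.sum_mul, Finset.sum_mul,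
      ← Finset.sum_sub_distrib]
  simp only [e1, e2, e3]
  have hz : ∑ x, ∑ k, (A x k - B x k - C x k) = 0 := by
    apply sum_antisym
    intro x k
    simp only [hA, hB, hC, hFqp, hGqp, hHqp]
    simp only [hFqq k x, hFpp k x, hGqq k x, hGpp k x, hHqq k x, hHpp k x]
    ring
  have hsplit : ∑ x, ∑ k, (A x k - B x k - C x k)
      = (∑ x, ∑ k, A x k) - (∑ x, ∑ k, B x k) - (∑ x, ∑ k, C x k) := by
    simp only [Finset.sum_sub_distrib]
  rw [hsplit] at hz
  linarith

lemma jacobi {N : ℕ} {f g h : DN N → ℝ} (hf : ContDiff ℝ (⊤ : ℕ∞) f) (hg : ContDiff ℝ (⊤ : ℕ∞) g)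
    (hh : ContDiff ℝ (⊤ : ℕ∞) h) (z : DN N) :
    Pb N f (Pb N g h) z - Pb N g (Pb N f h) z = Pb N (Pb N f g) h z := by
  simp only [pdv_Pb hg hh, pdv_Pb hf hh, pdv_Pb hf hg, Pb]
  exact jac_alg
    (fun a => pdv (dq N a) f z) (fun a => pdv (dp N a) f z)
    (fun a => pdv (dq N a) g z) (fun a => pdv (dp N a) g z)
    (fun a => pdv (dq N a) h z) (fun a => pdv (dp N a) h z)
    (fun a b => pdv (dq N a) (pdv (dq N b) f) z) (fun a b => pdv (dq N a) (pdv (dp N b) f) z)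
    (fun a b => pdv (dp N a) (pdv (dq N b) f) z) (fun a b => pdv (dp N a) (pdv (dp N b) f) z)
    (fun a b => pdv (dq N a) (pdv (dq N b) g) z) (fun a b => pdv (dq N a) (pdv (dp N b) g) z)
    (fun a b => pdv (dp N a) (pdv (dq N b) g) z) (fun a b => pdv (dp N a) (pdv (dp N b) g) z)
    (fun a b => pdv (dq N a) (pdv (dq N b) h) z) (fun a b => pdv (dq N a) (pdv (dp N b) h) z)
    (fun a b => pdv (dp N a) (pdv (dq N b) h) z) (fun a b => pdv (dp N a) (pdv (dp N b) h) z)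
    (fun a b => pdv_comm hf _ _ z) (fun a b => pdv_comm hf _ _ z) (fun a b => pdv_comm hf _ _ z)
    (fun a b => pdv_comm hg _ _ z) (fun a b => pdv_comm hg _ _ z) (fun a b => pdv_comm hg _ _ z)
    (fun a b => pdv_comm hh _ _ z) (fun a b => pdv_comm hh _ _ z) (fun a b => pdv_comm hh _ _ z)


/-- if a smooth `Θ` of `(q¹,…,q^{N−1},p¹,…,p^{N−1},x¹,…,x^{2N},y¹,…,y^{2N})`
satisfies `Θ_{x^i y^j} − Θ_{x^j y^i} = {Θ_{x^i}, Θ_{x^j}}_{(q,p)}` identically for fixed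
distinct `i, j`, then the Lax operators commute, `L_i (L_j Ψ) = L_j (L_i Ψ)`, for every
smooth `Ψ` and every `λ ∈ ℝ`. -/
theorem stmt10 (N : ℕ) (hN : 2 ≤ N) (Θ : DN N → ℝ) (hΘ : ContDiff ℝ (⊤ : ℕ∞) Θ)
    (i j : Fin (2 * N)) (hij : i ≠ j)
    (heav : ∀ z : DN N,
      pdv (dx N i) (pdv (dy N j) Θ) z - pdv (dx N j) (pdv (dy N i) Θ) z =
        ∑ k : Fin (N - 1),
          (pdv (dq N k) (pdv (dx N i) Θ) z * pdv (dp N k) (pdv (dx N j) Θ) z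
            - pdv (dp N k) (pdv (dx N i) Θ) z * pdv (dq N k) (pdv (dx N j) Θ) z)) :
    ∀ lam : ℝ, ∀ Ψ : DN N → ℝ, ContDiff ℝ (⊤ : ℕ∞) Ψ → ∀ z : DN N,
      Lop N Θ lam i (Lop N Θ lam j Ψ) z = Lop N Θ lam j (Lop N Θ lam i Ψ) z := by
  intro lam Ψ hΨ z
  have hAi : ContDiff ℝ (⊤ : ℕ∞) (pdv (dx N i) Θ) := pdv_smooth hΘ _
  have hAj : ContDiff ℝ (⊤ : ℕ∞) (pdv (dx N j) Θ) := pdv_smooth hΘ _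
  have hLop : ∀ m : Fin (2 * N), Lop N Θ lam m Ψ
      = fun w => (pdv (dy N m) Ψ w - lam * pdv (dx N m) Ψ w)
          + Pb N (pdv (dx N m) Θ) Ψ w := fun _ => rfl
  have hexp0 : ∀ (m : Fin (2 * N)) (v : DN N) (w : DN N),
      pdv v (Lop N Θ lam m Ψ) w =
        pdv v (pdv (dy N m) Ψ) w - lam * pdv v (pdv (dx N m) Ψ) w
          + pdv v (Pb N (pdv (dx N m) Θ) Ψ) w := by
    intro m v w
    have dA : Differentiable ℝ (fun w => pdv (dy N m) Ψ w - lam * pdv (dx N m) Ψ w) :=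
      (pdv_diff hΨ _).sub ((pdv_diff hΨ _).const_mul lam)
    have dB : Differentiable ℝ (Pb N (pdv (dx N m) Θ) Ψ) :=
      (Pb_smooth (pdv_smooth hΘ _) hΨ).differentiable (by simp)
    rw [hLop m, pdv_add (dA w) (dB w) v,
      pdv_sub (pdv_diff hΨ _ w) (((pdv_diff hΨ _).const_mul lam) w) v,
      pdv_const_mul (pdv_diff hΨ _ w) lam v]
  have hexp : ∀ (m : Fin (2 * N)) (v : DN N) (w : DN N),
      pdv v (Lop N Θ lam m Ψ) w =
        pdv (dy N m) (pdv v Ψ) w - lam * pdv (dx N m) (pdv v Ψ) w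
          + Pb N (pdv v (pdv (dx N m) Θ)) Ψ w + Pb N (pdv (dx N m) Θ) (pdv v Ψ) w := by
    intro m v w
    rw [hexp0 m v w, pdv_Pb (pdv_smooth hΘ _) hΨ v w,
      pdv_comm hΨ v (dy N m) w, pdv_comm hΨ v (dx N m) w]
    ring
  have hPbLop : ∀ (m : Fin (2 * N)) (F : DN N → ℝ), ContDiff ℝ (⊤ : ℕ∞) F →
      Pb N F (Lop N Θ lam m Ψ) z =
        Pb N F (pdv (dy N m) Ψ) z - lam * Pb N F (pdv (dx N m) Ψ) z
          + Pb N F (Pb N (pdv (dx N m) Θ) Ψ) z := by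
    intro m F hF
    simp only [Pb]
    rw [Finset.mul_sum, ← Finset.sum_sub_distrib, ← Finset.sum_add_distrib]
    apply Finset.sum_congr rfl
    intro k _
    rw [hexp0 m (dp N k) z, hexp0 m (dq N k) z]
    ring
  have outer : ∀ m m' : Fin (2 * N), Lop N Θ lam m (Lop N Θ lam m' Ψ) z
      = pdv (dy N m) (Lop N Θ lam m' Ψ) z - lam * pdv (dx N m) (Lop N Θ lam m' Ψ) z
        + Pb N (pdv (dx N m) Θ) (Lop N Θ lam m' Ψ) z := fun _ _ => rfl
  rw [outer i j, outer j i, hexp j (dy N i) z, hexp j (dx N i) z,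
    hexp i (dy N j) z, hexp i (dx N j) z,
    hPbLop j (pdv (dx N i) Θ) hAi, hPbLop i (pdv (dx N j) Θ) hAj]
  have c1 : pdv (dy N j) (pdv (dy N i) Ψ) z = pdv (dy N i) (pdv (dy N j) Ψ) z :=
    pdv_comm hΨ _ _ z
  have c2 : pdv (dx N j) (pdv (dy N i) Ψ) z = pdv (dy N i) (pdv (dx N j) Ψ) z :=
    pdv_comm hΨ _ _ z
  have c3 : pdv (dy N j) (pdv (dx N i) Ψ) z = pdv (dx N i) (pdv (dy N j) Ψ) z :=
    pdv_comm hΨ _ _ z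
  have c4 : pdv (dx N j) (pdv (dx N i) Ψ) z = pdv (dx N i) (pdv (dx N j) Ψ) z :=
    pdv_comm hΨ _ _ z
  have cxx : Pb N (pdv (dx N i) (pdv (dx N j) Θ)) Ψ z
      = Pb N (pdv (dx N j) (pdv (dx N i) Θ)) Ψ z := by
    have hfe : pdv (dx N i) (pdv (dx N j) Θ) = pdv (dx N j) (pdv (dx N i) Θ) :=
      funext fun w => pdv_comm hΘ _ _ w
    rw [hfe]
  have chev : Pb N (pdv (dy N i) (pdv (dx N j) Θ)) Ψ z
      - Pb N (pdv (dy N j) (pdv (dx N i) Θ)) Ψ z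
      = - Pb N (Pb N (pdv (dx N i) Θ) (pdv (dx N j) Θ)) Ψ z := by
    have hfun : (fun w => pdv (dy N i) (pdv (dx N j) Θ) w - pdv (dy N j) (pdv (dx N i) Θ) w)
        = fun w => - Pb N (pdv (dx N i) Θ) (pdv (dx N j) Θ) w := by
      funext w
      rw [pdv_comm hΘ (dy N i) (dx N j) w, pdv_comm hΘ (dy N j) (dx N i) w]
      have h2 : Pb N (pdv (dx N i) Θ) (pdv (dx N j) Θ) w
          = pdv (dx N i) (pdv (dy N j) Θ) w - pdv (dx N j) (pdv (dy N i) Θ) w := (heav w).symm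
      rw [h2]
      ring
    rw [← Pb_sub_left (pdv_diff (pdv_smooth hΘ _) _) (pdv_diff (pdv_smooth hΘ _) _), hfun,
      Pb_neg_left]
  have cjac : Pb N (pdv (dx N i) Θ) (Pb N (pdv (dx N j) Θ) Ψ) z
      - Pb N (pdv (dx N j) Θ) (Pb N (pdv (dx N i) Θ) Ψ) z
      = Pb N (Pb N (pdv (dx N i) Θ) (pdv (dx N j) Θ)) Ψ z := jacobi hAi hAj hΨ z
  linear_combination c1 - lam * c2 - lam * c3 + lam ^ 2 * c4 - lam * cxx + chev + cjac


end
end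

section
/- Let N ≥ 2, let a^k, b^k ∈ ℝ^{2N} for k = 1,...,N−1, and define the vacuum potential Θ₀ of the variables (q¹,...,q^{N−1}, p¹,...,p^{N−1}, x¹,...,x^{2N}, y¹,...,y^{2N}) by Θ₀ := (1/2)Σ_{k=1}^{N−1}Σ_{i,j=1}^{2N}(a^k_i b^k_j − a^k_j b^k_i)x^i y^j + Σ_{k=1}^{N−1}Σ_{i=1}^{2N}(a^k_i p^k x^i − b^k_i q^k x^i). Then Θ₀ satisfies the 2+2N-dimensional heavenly equation Θ_{x^i y^j} − Θ_{x^j y^i} = {Θ_{x^i}, Θ_{x^j}}_{(q,p)} for every pair 1 ≤ i < j ≤ 2N, where {f,g}_{(q,p)} := Σ_{k=1}^{N−1}(f_{q^k}g_{p^k} − f_{p^k}g_{q^k}), and consequently ω_{ij} := (Θ₀)_{x^i y^j} − (Θ₀)_{x^j y^i} satisfies the 2N+2N-dimensional TED equation Σ_{σ∈S_{2N}} sgn(σ) ∏_{k=1}^{N} ω_{σ(2k−1),σ(2k)} = 0. -/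
noncomputable section

/-! The vacuum potential is a quadratic form `Θ₀ z = B z z`, so its second derivatives are the
constants `B v w + B w v`. Reading them off gives `Θ_{q^k x^i} = -b^k_i`, `Θ_{p^k x^i} = a^k_i` and
`ω_{ij} = Σ_k (a^k_i b^k_j - a^k_j b^k_i)`, which is the Poisson bracket. Expanding the products of
the Pfaffian-type sum of `ω = Σ_k a^k ∧ b^k` writes it as a sum of `2N × 2N` determinants whose rows
are among the `± a^k, b^k`; these span a space of dimension at most `2N - 2`, so every determinant
vanishes. -/

open Finset Module

theorem pdv_pdv_bilinear_self {E : Type*} [NormedAddCommGroup E] [NormedSpace ℝ E]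
    (B : E →L[ℝ] E →L[ℝ] ℝ) (v w z : E) :
    pdv v (pdv w fun z => B z z) z = B v w + B w v := by
  have hfirst : pdv w (fun z => B z z) = ⇑(B.flip w + B w) := by
    funext z
    change fderiv ℝ (fun y => B (id y) (id y)) z w = _
    rw [(B.hasFDerivAt_of_bilinear (hasFDerivAt_id z) (hasFDerivAt_id z)).fderiv]
    simp
  rw [pdv, hfirst, ContinuousLinearMap.fderiv]
  simp [add_comm]

def vacuumPairing (N : ℕ) (a b : Fin (N - 1) → Fin (2 * N) → ℝ) (z w : DN N) : ℝ :=
  (1 / 2) * ∑ k : Fin (N - 1), ∑ i : Fin (2 * N), ∑ j : Fin (2 * N),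
      (a k i * b k j - a k j * b k i) * z.2.2.1 i * w.2.2.2 j
    + ∑ k : Fin (N - 1), ∑ i : Fin (2 * N),
        (a k i * z.2.1 k * w.2.2.1 i - b k i * z.1 k * w.2.2.1 i)

theorem isBilinearMap_vacuumPairing (N : ℕ) (a b : Fin (N - 1) → Fin (2 * N) → ℝ) :
    IsBilinearMap ℝ (vacuumPairing N a b) where
  add_left z z' w := by
    simp only [vacuumPairing, Prod.fst_add, Prod.snd_add, Pi.add_apply, mul_add, add_mul,
      sum_add_distrib, add_sub_add_comm]
    ring
  smul_left c z w := by
    simp only [vacuumPairing, Prod.smul_fst, Prod.smul_snd, Pi.smul_apply, smul_eq_mul, mul_add,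
      mul_sum]
    congr 1
    · exact sum_congr rfl fun k _ => sum_congr rfl fun i _ => sum_congr rfl fun j _ => by ring
    · exact sum_congr rfl fun k _ => sum_congr rfl fun i _ => by ring
  add_right z w w' := by
    simp only [vacuumPairing, Prod.fst_add, Prod.snd_add, Pi.add_apply, mul_add,
      sum_add_distrib, add_sub_add_comm]
    ring
  smul_right c z w := by
    simp only [vacuumPairing, Prod.smul_fst, Prod.smul_snd, Pi.smul_apply, smul_eq_mul, mul_add,
      mul_sum]
    congr 1
    · exact sum_congr rfl fun k _ => sum_congr rfl fun i _ => sum_congr rfl fun j _ => by ring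
    · exact sum_congr rfl fun k _ => sum_congr rfl fun i _ => by ring
def vacuumForm (N : ℕ) (a b : Fin (N - 1) → Fin (2 * N) → ℝ) : DN N →L[ℝ] DN N →L[ℝ] ℝ :=
  (isBilinearMap_vacuumPairing N a b).toContinuousBilinearMap

theorem Fin.prod_univ_pairs {M : Type*} [CommMonoid M] {N : ℕ} (f : Fin (2 * N) → M) :
    ∏ i, f i = ∏ m : Fin N, f ⟨2 * m, by omega⟩ * f ⟨2 * m + 1, by omega⟩ := by
  let e : Fin N × Fin 2 ≃ Fin (2 * N) := finProdFinEquiv.trans (finCongr (mul_comm N 2))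
  rw [← e.prod_comp, Fintype.prod_prod_type]
  refine prod_congr rfl fun m _ => ?_
  rw [Fin.prod_univ_two]
  congr 2 <;> ext <;> simp [e, finProdFinEquiv, add_comm]

def Fin.interleave {α : Type*} {N : ℕ} (f g : Fin N → α) (i : Fin (2 * N)) : α :=
  if i.val % 2 = 0 then f ⟨i / 2, by omega⟩ else g ⟨i / 2, by omega⟩

@[simp] theorem Fin.interleave_even {α : Type*} {N : ℕ} (f g : Fin N → α) (m : Fin N) :
    Fin.interleave f g ⟨2 * m, by omega⟩ = f m := by
  simp [Fin.interleave]

@[simp] theorem Fin.interleave_odd {α : Type*} {N : ℕ} (f g : Fin N → α) (m : Fin N) :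
    Fin.interleave f g ⟨2 * m + 1, by omega⟩ = g m := by
  have hm : (2 * m.1 + 1) / 2 = m := by omega
  simp [Fin.interleave, Nat.add_mod, hm]

theorem Matrix.det_eq_zero_of_rows_mem {K n : Type*} [Field K] [Fintype n] [DecidableEq n]
    (M : Matrix n n K) (W : Submodule K (n → K)) (hM : ∀ i, M i ∈ W)
    (hW : finrank K W < Fintype.card n) : M.det = 0 := by
  by_contra hdet
  have hli : LinearIndependent K fun i => (⟨M i, hM i⟩ : W) :=
    .of_comp W.subtype (Matrix.linearIndependent_rows_of_det_ne_zero hdet)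
  exact hW.not_ge hli.fintype_card_le_finrank

theorem pfSum_sum_mul_eq_zero {N : ℕ} {T : Type*} [Fintype T] (u v : T → Fin (2 * N) → ℝ)
    (W : Submodule ℝ (Fin (2 * N) → ℝ)) (hu : ∀ t, u t ∈ W) (hv : ∀ t, v t ∈ W)
    (hW : finrank ℝ W < 2 * N) :
    pfSum N (fun i j => ∑ t, u t i * v t j) = 0 := by
  simp only [pfSum, prod_univ_sum, Fintype.piFinset_univ, mul_sum]
  rw [sum_comm]
  refine sum_eq_zero fun c _ => ?_
  -- the `c`-th term is the determinant of the matrix with rows `u (c 0), v (c 0), u (c 1), …`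
  let M : Matrix (Fin (2 * N)) (Fin (2 * N)) ℝ := .of (Fin.interleave (u ∘ c) (v ∘ c))
  have hM : M.det = 0 := by
    refine M.det_eq_zero_of_rows_mem W (fun i => ?_) (by simpa using hW)
    change Fin.interleave (u ∘ c) (v ∘ c) i ∈ W
    unfold Fin.interleave
    split_ifs
    exacts [hu _, hv _]
  rw [← M.det_transpose, Matrix.det_apply'] at hM
  rw [← hM]
  refine sum_congr rfl fun σ _ => ?_
  rw [Fin.prod_univ_pairs]
  simp [M]

theorem pfSum_sum_wedge_eq_zero {N : ℕ} {κ : Type*} [Fintype κ] (hκ : Fintype.card κ < N)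
    (a b : κ → Fin (2 * N) → ℝ) :
    pfSum N (fun i j => ∑ k, (a k i * b k j - a k j * b k i)) = 0 := by
  have hsplit : (fun i j => ∑ k, (a k i * b k j - a k j * b k i)) =
      fun i j => ∑ t, Sum.elim a (-b) t i * Sum.elim b a t j := by
    funext i j
    simp [Fintype.sum_sum_type, sub_eq_add_neg, sum_add_distrib, mul_comm]
  rw [hsplit]
  refine pfSum_sum_mul_eq_zero _ _ (Submodule.span ℝ (Set.range (Sum.elim a b))) ?_ ?_ ?_
  · rintro (k | k)
    · exact Submodule.subset_span ⟨.inl k, rfl⟩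
    · exact neg_mem (Submodule.subset_span ⟨.inr k, rfl⟩)
  · rintro (k | k)
    · exact Submodule.subset_span ⟨.inr k, rfl⟩
    · exact Submodule.subset_span ⟨.inl k, rfl⟩
  · calc finrank ℝ (Submodule.span ℝ (Set.range (Sum.elim a b)))
        ≤ Fintype.card (κ ⊕ κ) := finrank_range_le_card _
      _ < 2 * N := by simp only [Fintype.card_sum]; omega

section Vacuum

variable (N : ℕ) (a b : Fin (N - 1) → Fin (2 * N) → ℝ)

theorem pdv_dx_pdv_dy_vacuum (i j : Fin (2 * N)) (z : DN N) :
    pdv (dx N i) (pdv (dy N j) fun z => vacuumForm N a b z z) z =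
      1 / 2 * ∑ k, (a k i * b k j - a k j * b k i) := by
  rw [pdv_pdv_bilinear_self]
  simp [vacuumForm, vacuumPairing, dx, dy, Pi.single_apply]

theorem pdv_dq_pdv_dx_vacuum (k : Fin (N - 1)) (i : Fin (2 * N)) (z : DN N) :
    pdv (dq N k) (pdv (dx N i) fun z => vacuumForm N a b z z) z = -b k i := by
  rw [pdv_pdv_bilinear_self]
  simp [vacuumForm, vacuumPairing, dx, dq, Pi.single_apply]

theorem pdv_dp_pdv_dx_vacuum (k : Fin (N - 1)) (i : Fin (2 * N)) (z : DN N) :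
    pdv (dp N k) (pdv (dx N i) fun z => vacuumForm N a b z z) z = a k i := by
  rw [pdv_pdv_bilinear_self]
  simp [vacuumForm, vacuumPairing, dx, dp, Pi.single_apply]

theorem ωc_vacuum (i j : Fin (2 * N)) (z : DN N) :
    ωc N (fun z => vacuumForm N a b z z) i j z = ∑ k, (a k i * b k j - a k j * b k i) := by
  rw [ωc, pdv_dx_pdv_dy_vacuum, pdv_dx_pdv_dy_vacuum, ← mul_sub, ← sum_sub_distrib, mul_sum]
  exact sum_congr rfl fun k _ => by ring

end Vacuum

/-- the vacuum potential
`Θ₀ = ½ Σ_k Σ_{i,j}(a^k_i b^k_j − a^k_j b^k_i)x^i y^j + Σ_k Σ_i (a^k_i p^k x^i − b^k_i q^k x^i)`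
satisfies the `2+2N`-dimensional heavenly equation
`Θ_{x^i y^j} − Θ_{x^j y^i} = {Θ_{x^i}, Θ_{x^j}}_{(q,p)}` for every `1 ≤ i < j ≤ 2N`, and
consequently `ω_{ij} = (Θ₀)_{x^i y^j} − (Θ₀)_{x^j y^i}` satisfies the `2N+2N`-dimensional
TED equation `Σ_{σ ∈ S_{2N}} sgn(σ) Π_{k=1}^{N} ω_{σ(2k−1) σ(2k)} = 0`. -/
theorem stmt17 (N : ℕ) (hN : 2 ≤ N)
    (a b : Fin (N - 1) → Fin (2 * N) → ℝ) (Θ : DN N → ℝ)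
    (hΘ : ∀ q p : Fin (N - 1) → ℝ, ∀ x y : Fin (2 * N) → ℝ, Θ (q, p, x, y) =
      (1 / 2) * ∑ k : Fin (N - 1), ∑ i : Fin (2 * N), ∑ j : Fin (2 * N),
          (a k i * b k j - a k j * b k i) * x i * y j
        + ∑ k : Fin (N - 1), ∑ i : Fin (2 * N), (a k i * p k * x i - b k i * q k * x i)) :
    (∀ i j : Fin (2 * N), i < j → ∀ z : DN N,
      ωc N Θ i j z =
        ∑ k : Fin (N - 1),
          (pdv (dq N k) (pdv (dx N i) Θ) z * pdv (dp N k) (pdv (dx N j) Θ) z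
            - pdv (dp N k) (pdv (dx N i) Θ) z * pdv (dq N k) (pdv (dx N j) Θ) z)) ∧
    (∀ z : DN N, pfSum N (fun i j => ωc N Θ i j z) = 0) := by
  obtain rfl : Θ = fun z => vacuumForm N a b z z := funext fun ⟨q, p, x, y⟩ => hΘ q p x y
  refine ⟨fun i j _ z => ?_, fun z => ?_⟩
  · simp only [ωc_vacuum, pdv_dq_pdv_dx_vacuum, pdv_dp_pdv_dx_vacuum]
    exact sum_congr rfl fun k _ => by ring
  · simp only [ωc_vacuum]
    exact pfSum_sum_wedge_eq_zero (by simp only [Fintype.card_fin]; omega) a b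
end
end
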